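/- Let f : {0,1}^n → {-1,1} be symmetric with r₀ = r₀(f) and r₁ = r₁(f). Then R(f) ≥ ((n−r₀+1)(n−r₀)·C(n, r₀−1) + (n−r₁+1)(n−r₁)·C(n, r₁−1))·2^{-n}. -/

import Mathlib

open Finset

def wt {n : ℕ} (x : Fin n → ZMod 2) : ℕ := ∑ i, (x i).val

noncomputable def fhat {n : ℕ} (f : (Fin n → ZMod 2) → ℝ) (S : Finset (Fin n)) : ℝ :=
  (∑ x : Fin n → ZMod 2, f x * (-1 : ℝ) ^ (∑ i ∈ S, (x i).val)) / 2 ^ n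

/-- `f` or `f · parity` is constant on the band of inputs with `r₀ ≤ |x| ≤ n - r₁`. -/
def BandConst {n : ℕ} (f : (Fin n → ZMod 2) → ℝ) (r₀ r₁ : ℕ) : Prop :=
  (∃ c : ℝ, ∀ x, r₀ ≤ wt x → wt x + r₁ ≤ n → f x = c) ∨
  (∃ c : ℝ, ∀ x, r₀ ≤ wt x → wt x + r₁ ≤ n → f x * (-1 : ℝ) ^ wt x = c)

/-! ### Auxiliary lemmas -/

lemma zmod2_cases (a : ZMod 2) : a = 0 ∨ a = 1 := by revert a; decide

lemma neg_one_pow_val_add (a b : ZMod 2) :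
    ((-1:ℝ)) ^ (a+b).val = (-1:ℝ)^a.val * (-1:ℝ)^b.val := by
  rcases zmod2_cases a with ha | ha <;> rcases zmod2_cases b with hb | hb <;>
    subst ha <;> subst hb <;>
    norm_num [show ((0:ZMod 2)).val = 0 from rfl, show ((1:ZMod 2)).val = 1 from rfl,
      show ((2:ZMod 2)).val = 0 from rfl]

lemma chi_mul {n : ℕ} (x y : Fin n → ZMod 2) (S : Finset (Fin n)) :
    (-1:ℝ) ^ (∑ i ∈ S, ((x+y) i).val) =
      (-1:ℝ) ^ (∑ i ∈ S, (x i).val) * (-1:ℝ) ^ (∑ i ∈ S, (y i).val) := by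
  rw [← Finset.prod_pow_eq_pow_sum, ← Finset.prod_pow_eq_pow_sum, ← Finset.prod_pow_eq_pow_sum,
    ← Finset.prod_mul_distrib]
  exact Finset.prod_congr rfl fun i _ => neg_one_pow_val_add (x i) (y i)

lemma pi_add_self {n : ℕ} (a : Fin n → ZMod 2) : a + a = 0 := by
  funext i
  exact CharTwo.add_self_eq_zero (a i)

lemma orth {n : ℕ} (z : Fin n → ZMod 2) :
    (∑ S : Finset (Fin n), (-1:ℝ) ^ (∑ i ∈ S, (z i).val)) =
      if z = 0 then (2:ℝ)^n else 0 := by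
  have h1 : ∀ S : Finset (Fin n), (-1:ℝ) ^ (∑ i ∈ S, (z i).val) =
      ∏ i ∈ S, (-1:ℝ) ^ (z i).val := fun S => (Finset.prod_pow_eq_pow_sum _ _ _).symm
  simp_rw [h1]
  have key := Finset.prod_add (fun i : Fin n => (-1:ℝ)^(z i).val) (fun _ => 1) Finset.univ
  simp only [Finset.prod_const_one, mul_one, Finset.powerset_univ] at key
  rw [← key]
  by_cases hz : z = 0
  · subst hz
    simp only [if_pos rfl, Pi.zero_apply, show ((0:ZMod 2)).val = 0 from rfl, pow_zero]
    norm_num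
  · rw [if_neg hz]
    obtain ⟨i, hi⟩ : ∃ i, z i ≠ 0 := by
      by_contra hc; push_neg at hc; exact hz (funext hc)
    apply Finset.prod_eq_zero (Finset.mem_univ i)
    have h1 : z i = 1 := (zmod2_cases (z i)).resolve_left hi
    rw [h1, show ((1:ZMod 2)).val = 1 from rfl]; norm_num

lemma parseval_shift {n : ℕ} (f : (Fin n → ZMod 2) → ℝ) (w : Fin n → ZMod 2) :
    ∑ S : Finset (Fin n), (-1:ℝ)^(∑ i ∈ S, (w i).val) * fhat f S ^ 2
      = (∑ x : Fin n → ZMod 2, f x * f (x + w)) / 2^n := by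
  have key : ∀ S : Finset (Fin n), (-1:ℝ)^(∑ i ∈ S, (w i).val) * fhat f S ^ 2
      = (∑ x : Fin n → ZMod 2, ∑ y : Fin n → ZMod 2,
          f x * f y * (-1:ℝ)^(∑ i ∈ S, ((w + x + y) i).val)) / (2^n * 2^n) := by
    intro S
    rw [fhat, div_pow, sq, Finset.sum_mul_sum, ← mul_div_assoc,
      show ((2:ℝ)^n)^2 = 2^n * 2^n from sq _]
    congr 1
    rw [Finset.mul_sum]
    refine Finset.sum_congr rfl fun x _ => ?_
    rw [Finset.mul_sum]
    refine Finset.sum_congr rfl fun y _ => ?_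
    rw [chi_mul (w+x) y, chi_mul w x]
    ring
  rw [Finset.sum_congr rfl fun S _ => key S, ← Finset.sum_div]
  rw [Finset.sum_comm]
  have inner : ∀ x : Fin n → ZMod 2,
      (∑ S : Finset (Fin n), ∑ y : Fin n → ZMod 2,
        f x * f y * (-1:ℝ)^(∑ i ∈ S, ((w + x + y) i).val))
      = f x * f (x + w) * 2^n := by
    intro x
    rw [Finset.sum_comm]
    have h3 : ∀ y : Fin n → ZMod 2,
        (∑ S : Finset (Fin n), f x * f y * (-1:ℝ)^(∑ i ∈ S, ((w + x + y) i).val))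
        = if y = w + x then f x * f y * 2^n else 0 := by
      intro y
      rw [← Finset.mul_sum, orth]
      have hiff : (w + x + y = 0) ↔ (y = w + x) := by
        constructor
        · intro h
          have h2 := congrArg (· + y) h
          simp only [add_assoc, pi_add_self, add_zero, zero_add] at h2
          exact h2.symm
        · intro h; subst h; exact pi_add_self (w + x)
      rw [if_congr hiff rfl rfl]
      split_ifs <;> simp
    rw [Finset.sum_congr rfl fun y _ => h3 y, Finset.sum_ite_eq' Finset.univ (w + x)]
    simp [add_comm w x]
  rw [Finset.sum_congr rfl fun x _ => inner x, ← Finset.sum_mul]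
  have h2 : (0:ℝ) < 2^n := by positivity
  field_simp

def ee {n : ℕ} (i : Fin n) : Fin n → ZMod 2 := fun k => if k = i then 1 else 0

lemma chi_single {n : ℕ} (i : Fin n) (S : Finset (Fin n)) :
    (-1:ℝ) ^ (∑ k ∈ S, ((ee i) k).val) = if i ∈ S then -1 else 1 := by
  have h : (∑ k ∈ S, ((ee i) k).val) = if i ∈ S then 1 else 0 := by
    rw [show (∑ k ∈ S, ((ee i) k).val) = ∑ k ∈ S, (if k = i then 1 else 0) from
      Finset.sum_congr rfl fun k _ => by
        by_cases h : k = i <;> simp [ee, h, show ((1:ZMod 2)).val = 1 from rfl]]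
    rw [Finset.sum_ite_eq' S i (fun _ => 1)]
  rw [h]
  split_ifs <;> norm_num

lemma coeff_identity {n : ℕ} (S : Finset (Fin n)) :
    (S.card : ℝ) * ((n : ℝ) - S.card) =
      (1/4) * ∑ p : Fin n × Fin n,
        (1 - (-1:ℝ) ^ (∑ k ∈ S, ((ee p.1 + ee p.2) k).val)) := by
  have hχ : ∀ p : Fin n × Fin n,
      (1 - (-1:ℝ) ^ (∑ k ∈ S, ((ee p.1 + ee p.2) k).val))
        = 1 - (if p.1 ∈ S then (-1:ℝ) else 1) * (if p.2 ∈ S then (-1:ℝ) else 1) := by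
    intro p
    rw [chi_mul, chi_single, chi_single]
  rw [Finset.sum_congr rfl fun p _ => hχ p]
  rw [Fintype.sum_prod_type]
  have hsum : (∑ i : Fin n, (if i ∈ S then (-1:ℝ) else 1)) = (n:ℝ) - 2 * S.card := by
    rw [Finset.sum_congr rfl (fun i (_ : i ∈ univ) => by
      show (if i ∈ S then (-1:ℝ) else 1) = 1 - 2 * (if i ∈ S then (1:ℝ) else 0)
      split_ifs <;> ring)]
    rw [Finset.sum_sub_distrib, Finset.sum_const, ← Finset.mul_sum, Finset.sum_boole,
      Finset.filter_univ_mem]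
    simp
  have expand : ∀ i : Fin n,
      (∑ j : Fin n, (1 - (if i ∈ S then (-1:ℝ) else 1) * (if j ∈ S then (-1:ℝ) else 1)))
      = (n:ℝ) - (if i ∈ S then (-1:ℝ) else 1) * ((n:ℝ) - 2 * S.card) := by
    intro i
    rw [Finset.sum_sub_distrib, Finset.sum_const, ← Finset.mul_sum, hsum]
    simp
  rw [Finset.sum_congr rfl fun i _ => expand i]
  rw [Finset.sum_sub_distrib, Finset.sum_const, ← Finset.sum_mul, hsum]
  simp only [Finset.card_univ, Fintype.card_fin, nsmul_eq_mul]
  ring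

lemma main_identity {n : ℕ} (f : (Fin n → ZMod 2) → ℝ) :
    ∑ S : Finset (Fin n), (S.card : ℝ) * ((n : ℝ) - S.card) * fhat f S ^ 2
      = (∑ p : Fin n × Fin n, ∑ x : Fin n → ZMod 2,
          f x * (f x - f (x + (ee p.1 + ee p.2)))) / 2 ^ n / 4 := by
  have parse0 : ∑ S : Finset (Fin n), fhat f S ^ 2
      = (∑ x : Fin n → ZMod 2, f x * f x) / 2^n := by
    have := parseval_shift f 0
    simpa [show ∀ S : Finset (Fin n), (∑ i ∈ S, ((0 : Fin n → ZMod 2) i).val) = 0 from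
      fun S => Finset.sum_eq_zero fun i _ => rfl] using this
  rw [Finset.sum_congr rfl fun S (_ : S ∈ univ) => by
    rw [coeff_identity S, mul_assoc, Finset.sum_mul]]
  rw [← Finset.mul_sum, Finset.sum_comm]
  have hper : ∀ p : Fin n × Fin n,
      (∑ S : Finset (Fin n),
        (1 - (-1:ℝ) ^ (∑ k ∈ S, ((ee p.1 + ee p.2) k).val)) * fhat f S ^ 2)
      = (∑ x : Fin n → ZMod 2, f x * (f x - f (x + (ee p.1 + ee p.2)))) / 2^n := by
    intro p
    rw [Finset.sum_congr rfl fun S (_ : S ∈ univ) => by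
      show _ = fhat f S ^2 - (-1:ℝ) ^ (∑ k ∈ S, ((ee p.1 + ee p.2) k).val) * fhat f S ^ 2
      ring]
    rw [Finset.sum_sub_distrib, parse0, parseval_shift, div_sub_div_same,
      ← Finset.sum_sub_distrib]
    congr 1
    exact Finset.sum_congr rfl fun x _ => by ring
  rw [Finset.sum_congr rfl fun p _ => hper p, ← Finset.sum_div]
  ring

/-! ### Weight lemmas -/

lemma wt_split {n : ℕ} (x : Fin n → ZMod 2) {i j : Fin n} (hij : i ≠ j) :
    wt x = (∑ k ∈ (univ \ {i, j} : Finset (Fin n)), (x k).val) + (x i).val + (x j).val := by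
  have h1 : wt x = (∑ k ∈ (univ \ {i} : Finset (Fin n)), (x k).val) + (x i).val :=
    (Finset.sum_eq_sum_sdiff_singleton_add (Finset.mem_univ i) _)
  have hj : j ∈ (univ \ {i} : Finset (Fin n)) := by simp [hij.symm]
  have h2 : (∑ k ∈ (univ \ {i} : Finset (Fin n)), (x k).val)
      = (∑ k ∈ ((univ \ {i}) \ {j} : Finset (Fin n)), (x k).val) + (x j).val :=
    (Finset.sum_eq_sum_sdiff_singleton_add hj _)
  have h3 : ((univ \ {i}) \ {j} : Finset (Fin n)) = univ \ {i, j} := by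
    ext k; simp
  rw [h1, h2, h3]
  omega

lemma apply_flip_eq {n : ℕ} (x : Fin n → ZMod 2) {i j k : Fin n}
    (hki : k ≠ i) (hkj : k ≠ j) : (x + (ee i + ee j)) k = x k := by
  simp [ee, hki, hkj]

lemma apply_flip_i {n : ℕ} (x : Fin n → ZMod 2) {i j : Fin n} (hij : i ≠ j) :
    (x + (ee i + ee j)) i = x i + 1 := by
  simp [ee, hij]

lemma apply_flip_j {n : ℕ} (x : Fin n → ZMod 2) {i j : Fin n} (hij : i ≠ j) :
    (x + (ee i + ee j)) j = x j + 1 := by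
  simp [ee, hij.symm]

lemma wt_flip_rest {n : ℕ} (x : Fin n → ZMod 2) {i j : Fin n} :
    (∑ k ∈ (univ \ {i, j} : Finset (Fin n)), ((x + (ee i + ee j)) k).val)
      = ∑ k ∈ (univ \ {i, j} : Finset (Fin n)), (x k).val := by
  refine Finset.sum_congr rfl fun k hk => ?_
  simp only [Finset.mem_sdiff, Finset.mem_insert, Finset.mem_singleton] at hk
  push_neg at hk
  rw [apply_flip_eq x hk.2.1 hk.2.2]

lemma wt_flip_up {n : ℕ} {x : Fin n → ZMod 2} {i j : Fin n} (hij : i ≠ j)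
    (hi : x i = 0) (hj : x j = 0) : wt (x + (ee i + ee j)) = wt x + 2 := by
  rw [wt_split (x + (ee i + ee j)) hij, wt_split x hij, wt_flip_rest x,
    apply_flip_i x hij, apply_flip_j x hij, hi, hj]
  norm_num [show ((1:ZMod 2)).val = 1 from rfl, show ((0:ZMod 2)).val = 0 from rfl]

lemma wt_flip_down {n : ℕ} {x : Fin n → ZMod 2} {i j : Fin n} (hij : i ≠ j)
    (hi : x i = 1) (hj : x j = 1) : wt (x + (ee i + ee j)) + 2 = wt x := by
  rw [wt_split (x + (ee i + ee j)) hij, wt_split x hij, wt_flip_rest x,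
    apply_flip_i x hij, apply_flip_j x hij, hi, hj]
  norm_num [show ((2:ZMod 2)).val = 0 from rfl, show ((1:ZMod 2)).val = 1 from rfl]

lemma wt_eq_card {n : ℕ} (x : Fin n → ZMod 2) :
    wt x = (univ.filter fun i => x i = 1).card := by
  rw [wt, Finset.card_filter]
  refine Finset.sum_congr rfl fun i _ => ?_
  rcases zmod2_cases (x i) with h | h <;>
    simp [h, show ((0:ZMod 2)).val = 0 from rfl, show ((1:ZMod 2)).val = 1 from rfl]

lemma card_wt {n k : ℕ} :
    ((univ : Finset (Fin n → ZMod 2)).filter fun x => wt x = k).card = n.choose k := by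
  have hc : (Finset.powersetCard k (univ : Finset (Fin n))).card = n.choose k := by
    rw [Finset.card_powersetCard]; simp
  rw [← hc]
  · apply Finset.card_nbij' (i := fun x => univ.filter fun i => x i = 1)
      (j := fun S i => if i ∈ S then 1 else 0)
    · intro x hx
      simp only [Finset.mem_coe, Finset.mem_filter, Finset.mem_univ, true_and] at hx
      rw [Finset.mem_coe, Finset.mem_powersetCard_univ, ← wt_eq_card, hx]
    · intro S hS
      simp only [Finset.mem_coe, Finset.mem_powersetCard_univ] at hS
      simp only [Finset.mem_coe, Finset.mem_filter, Finset.mem_univ, true_and]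
      rw [wt_eq_card]
      rw [← hS]
      congr 1
      ext i
      simp only [Finset.mem_filter, Finset.mem_univ, true_and]
      constructor
      · intro h
        by_contra hc
        simp [hc] at h
      · intro h; simp [h]
    · intro x hx
      funext i
      rcases zmod2_cases (x i) with h | h <;> simp [h]
    · intro S hS
      ext i
      simp only [Finset.mem_filter, Finset.mem_univ, true_and]
      constructor
      · intro h
        by_contra hc
        simp [hc] at h
      · intro h; simp [h]

/-! ### Band minimality facts -/

lemma fact1 {n r₀ r₁ : ℕ} {f : (Fin n → ZMod 2) → ℝ}
    (hsym : ∀ x y, wt x = wt y → f x = f y)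
    (h0 : 2 * r₀ < n) (h1 : 2 * r₁ < n)
    (hP : BandConst f r₀ r₁)
    (hmin0 : ∀ r₀' < r₀, ¬ BandConst f r₀' r₁) :
    ∀ x y, wt x + 1 = r₀ → wt y = r₀ + 1 → f x ≠ f y := by
  intro x y hx hy heq
  apply hmin0 (r₀ - 1) (by omega)
  rcases hP with ⟨c, hc⟩ | ⟨c, hc⟩
  · left
    refine ⟨c, fun z hz1 hz2 => ?_⟩
    by_cases hz : r₀ ≤ wt z
    · exact hc z hz hz2
    · have hwz : wt z = wt x := by omega
      rw [hsym z x hwz, heq]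
      exact hc y (by omega) (by omega)
  · right
    refine ⟨c, fun z hz1 hz2 => ?_⟩
    by_cases hz : r₀ ≤ wt z
    · exact hc z hz hz2
    · have hwz : wt z = wt x := by omega
      have hpow : ((-1:ℝ)) ^ wt z = (-1:ℝ) ^ wt y := by
        rw [show wt y = wt z + 2 by omega, pow_add]
        norm_num
      rw [hsym z x hwz, heq, hpow]
      exact hc y (by omega) (by omega)

lemma fact2 {n r₀ r₁ : ℕ} {f : (Fin n → ZMod 2) → ℝ}
    (hsym : ∀ x y, wt x = wt y → f x = f y)
    (h0 : 2 * r₀ < n) (h1 : 2 * r₁ < n)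
    (hP : BandConst f r₀ r₁)
    (hmin1 : ∀ r₁' < r₁, ¬ BandConst f r₀ r₁') (hr : r₁ ≠ 0) :
    ∀ x y, wt x + r₁ + 1 = n → wt y + r₁ = n + 1 → f x ≠ f y := by
  intro x y hx hy heq
  apply hmin1 (r₁ - 1) (by omega)
  rcases hP with ⟨c, hc⟩ | ⟨c, hc⟩
  · left
    refine ⟨c, fun z hz1 hz2 => ?_⟩
    by_cases hz : wt z + r₁ ≤ n
    · exact hc z hz1 hz
    · have hwz : wt z = wt y := by omega
      rw [hsym z y hwz, ← heq]
      exact hc x (by omega) (by omega)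
  · right
    refine ⟨c, fun z hz1 hz2 => ?_⟩
    by_cases hz : wt z + r₁ ≤ n
    · exact hc z hz1 hz
    · have hwz : wt z = wt y := by omega
      have hpow : ((-1:ℝ)) ^ wt z = (-1:ℝ) ^ wt x := by
        rw [hwz, show wt y = wt x + 2 by omega, pow_add]
        norm_num
      rw [hsym z y hwz, ← heq, hpow]
      exact hc x (by omega) (by omega)

/-! ### Boolean value lemmas -/

lemma t_nonneg {a b : ℝ} (ha : a = 1 ∨ a = -1) (hb : b = 1 ∨ b = -1) :
    0 ≤ a * (a - b) := by
  rcases ha with h | h <;> rcases hb with h' | h' <;> subst h <;> subst h' <;> norm_num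

lemma t_eq_two {a b : ℝ} (ha : a = 1 ∨ a = -1) (hb : b = 1 ∨ b = -1) (hne : a ≠ b) :
    a * (a - b) = 2 := by
  rcases ha with h | h <;> rcases hb with h' | h' <;> subst h <;> subst h' <;>
    first | (exact absurd rfl hne) | norm_num

/-! ### The level profile lower bound -/

noncomputable def phi (n r₀ r₁ k : ℕ) : ℝ :=
  (if r₀ ≠ 0 ∧ k + 1 = r₀ then 2 * (((n - k) * (n - k - 1) : ℕ) : ℝ) else 0) +
  (if r₀ ≠ 0 ∧ k = r₀ + 1 then 2 * ((k * (k - 1) : ℕ) : ℝ) else 0) +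
  (if r₁ ≠ 0 ∧ k + r₁ + 1 = n then 2 * (((n - k) * (n - k - 1) : ℕ) : ℝ) else 0) +
  (if r₁ ≠ 0 ∧ k + r₁ = n + 1 then 2 * ((k * (k - 1) : ℕ) : ℝ) else 0)

lemma sum_ite_wt {n : ℕ} (k₀ : ℕ) (v : ℕ → ℝ) (P : ℕ → Prop) [DecidablePred P]
    (hP : ∀ k, P k ↔ k = k₀) :
    ∑ x : Fin n → ZMod 2, (if P (wt x) then v (wt x) else 0)
      = (n.choose k₀ : ℝ) * v k₀ := by
  rw [Finset.sum_congr rfl (fun x (_ : x ∈ univ) => if_congr (hP (wt x)) rfl rfl)]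
  rw [← Finset.sum_filter]
  rw [Finset.sum_congr rfl (fun x hx => by rw [(Finset.mem_filter.mp hx).2])]
  rw [Finset.sum_const, card_wt, nsmul_eq_mul]

lemma natid1 (n r : ℕ) (hr : r ≠ 0) (hrn : 2*r < n) :
    n.choose (r+1) * ((r+1) * r) = n.choose (r-1) * ((n-r+1) * (n-r)) := by
  have e1 := Nat.choose_succ_right_eq n r
  have e2 := Nat.choose_succ_right_eq n (r-1)
  rw [show r - 1 + 1 = r from by omega, show n - (r-1) = n - r + 1 from by omega] at e2
  calc n.choose (r+1) * ((r+1)*r) = (n.choose (r+1) * (r+1)) * r := by ring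
    _ = (n.choose r * (n - r)) * r := by rw [e1]
    _ = (n.choose r * r) * (n-r) := by ring
    _ = (n.choose (r-1) * (n-r+1)) * (n-r) := by rw [e2]
    _ = n.choose (r-1) * ((n-r+1)*(n-r)) := by ring

lemma natid2 (n r : ℕ) (hr : r ≠ 0) (hrn : 2*r < n) :
    n.choose (n - r - 1) * ((r+1) * r) = n.choose (r-1) * ((n-r+1) * (n-r)) := by
  have h : n - r - 1 = n - (r+1) := by omega
  rw [h, Nat.choose_symm (by omega : r+1 ≤ n)]
  exact natid1 n r hr hrn

lemma natid3 (n r : ℕ) (hr : r ≠ 0) (hrn : 2*r < n) :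
    n.choose (n + 1 - r) * ((n+1-r) * (n+1-r-1)) = n.choose (r-1) * ((n-r+1) * (n-r)) := by
  have h1 : n + 1 - r = n - (r-1) := by omega
  rw [h1, Nat.choose_symm (by omega : r - 1 ≤ n), ← h1,
    show n + 1 - r = n - r + 1 from by omega, show n - r + 1 - 1 = n - r from by omega]

theorem R_lower_bound {n r₀ r₁ : ℕ} (f : (Fin n → ZMod 2) → ℝ)
    (hbool : ∀ x, f x = 1 ∨ f x = -1)
    (hsym : ∀ x y, wt x = wt y → f x = f y)
    (h0 : 2 * r₀ < n) (h1 : 2 * r₁ < n)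
    (hP : BandConst f r₀ r₁)
    (hmin0 : ∀ r₀' < r₀, ¬ BandConst f r₀' r₁)
    (hmin1 : ∀ r₁' < r₁, ¬ BandConst f r₀ r₁') :
    (∑ S : Finset (Fin n), (S.card : ℝ) * ((n : ℝ) - S.card) * fhat f S ^ 2) ≥
      (((if r₀ = 0 then 0 else
            ((n : ℝ) - r₀ + 1) * ((n : ℝ) - r₀) * (n.choose (r₀ - 1) : ℝ)) +
        (if r₁ = 0 then 0 else
            ((n : ℝ) - r₁ + 1) * ((n : ℝ) - r₁) * (n.choose (r₁ - 1) : ℝ)))) / 2 ^ n := by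
  classical
  set K : ℝ := ((if r₀ = 0 then 0 else
            ((n : ℝ) - r₀ + 1) * ((n : ℝ) - r₀) * (n.choose (r₀ - 1) : ℝ)) +
        (if r₁ = 0 then 0 else
            ((n : ℝ) - r₁ + 1) * ((n : ℝ) - r₁) * (n.choose (r₁ - 1) : ℝ))) with hK
  -- Claim H : pointwise lower bound
  have claimH : ∀ x : Fin n → ZMod 2,
      phi n r₀ r₁ (wt x) ≤ ∑ p : Fin n × Fin n,
        f x * (f x - f (x + (ee p.1 + ee p.2))) := by
    intro x
    set Z : Finset (Fin n) := univ.filter fun i => x i = 0 with hZdef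
    set O : Finset (Fin n) := univ.filter fun i => x i = 1 with hOdef
    have hOcard : O.card = wt x := (wt_eq_card x).symm
    have hZO : Z = Oᶜ := by
      ext i
      simp only [hZdef, hOdef, Finset.mem_filter, Finset.mem_univ, true_and,
        Finset.mem_compl]
      rcases zmod2_cases (x i) with h | h <;> simp [h]
    have hZcard : Z.card = n - wt x := by
      rw [hZO, Finset.card_compl, hOcard]
      simp
    have tnn : ∀ p : Fin n × Fin n,
        0 ≤ f x * (f x - f (x + (ee p.1 + ee p.2))) :=
      fun p => t_nonneg (hbool x) (hbool _)
    have hmono : ∑ p ∈ Z.offDiag ∪ O.offDiag,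
          f x * (f x - f (x + (ee p.1 + ee p.2)))
        ≤ ∑ p : Fin n × Fin n, f x * (f x - f (x + (ee p.1 + ee p.2))) :=
      Finset.sum_le_sum_of_subset_of_nonneg (Finset.subset_univ _)
        (fun p _ _ => tnn p)
    have hdisj : Disjoint Z.offDiag O.offDiag := by
      rw [Finset.disjoint_left]
      intro p hp hq
      have h1 := (Finset.mem_offDiag.mp hp).1
      have h2 := (Finset.mem_offDiag.mp hq).1
      rw [hZdef, Finset.mem_filter] at h1
      rw [hOdef, Finset.mem_filter] at h2
      rw [h1.2] at h2
      exact absurd h2.2 (by decide)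
    rw [Finset.sum_union hdisj] at hmono
    -- bound on the zero-pairs
    have boundZ :
        (if r₀ ≠ 0 ∧ wt x + 1 = r₀ then 2 * (((n - wt x) * (n - wt x - 1) : ℕ) : ℝ) else 0)
        + (if r₁ ≠ 0 ∧ wt x + r₁ + 1 = n then
            2 * (((n - wt x) * (n - wt x - 1) : ℕ) : ℝ) else 0)
        ≤ ∑ p ∈ Z.offDiag, f x * (f x - f (x + (ee p.1 + ee p.2))) := by
      have hcard : (Z.offDiag.card : ℝ) = (((n - wt x) * (n - wt x - 1) : ℕ) : ℝ) := by
        rw [Finset.offDiag_card, hZcard]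
        congr 1
        generalize (n - wt x) = m
        cases m with
        | zero => rfl
        | succ m => rw [Nat.succ_sub_one, Nat.mul_succ, Nat.add_sub_cancel]
      have hmem : ∀ p ∈ Z.offDiag, p.1 ≠ p.2 ∧ x p.1 = 0 ∧ x p.2 = 0 := by
        intro p hp
        obtain ⟨h1, h2, h3⟩ := Finset.mem_offDiag.mp hp
        rw [hZdef, Finset.mem_filter] at h1 h2
        exact ⟨h3, h1.2, h2.2⟩
      by_cases c0 : r₀ ≠ 0 ∧ wt x + 1 = r₀
      · have c2 : ¬ (r₁ ≠ 0 ∧ wt x + r₁ + 1 = n) := by omega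
        rw [if_pos c0, if_neg c2, add_zero]
        have ht : ∀ p ∈ Z.offDiag,
            f x * (f x - f (x + (ee p.1 + ee p.2))) = 2 := by
          intro p hp
          obtain ⟨hij, hi, hj⟩ := hmem p hp
          have hup := wt_flip_up hij hi hj
          exact t_eq_two (hbool x) (hbool _)
            (fact1 hsym h0 h1 hP hmin0 x _ c0.2 (by omega))
        rw [Finset.sum_congr rfl ht, Finset.sum_const, nsmul_eq_mul, hcard]
        ring_nf
        exact le_refl _
      · rw [if_neg c0, zero_add]
        by_cases c2 : r₁ ≠ 0 ∧ wt x + r₁ + 1 = n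
        · rw [if_pos c2]
          have ht : ∀ p ∈ Z.offDiag,
              f x * (f x - f (x + (ee p.1 + ee p.2))) = 2 := by
            intro p hp
            obtain ⟨hij, hi, hj⟩ := hmem p hp
            have hup := wt_flip_up hij hi hj
            exact t_eq_two (hbool x) (hbool _)
              (fact2 hsym h0 h1 hP hmin1 c2.1 x _ c2.2 (by omega))
          rw [Finset.sum_congr rfl ht, Finset.sum_const, nsmul_eq_mul, hcard]
          ring_nf
          exact le_refl _
        · rw [if_neg c2]
          exact Finset.sum_nonneg fun p _ => tnn p
    -- bound on the one-pairs
    have boundO :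
        (if r₀ ≠ 0 ∧ wt x = r₀ + 1 then 2 * ((wt x * (wt x - 1) : ℕ) : ℝ) else 0)
        + (if r₁ ≠ 0 ∧ wt x + r₁ = n + 1 then 2 * ((wt x * (wt x - 1) : ℕ) : ℝ) else 0)
        ≤ ∑ p ∈ O.offDiag, f x * (f x - f (x + (ee p.1 + ee p.2))) := by
      have hcard : (O.offDiag.card : ℝ) = ((wt x * (wt x - 1) : ℕ) : ℝ) := by
        rw [Finset.offDiag_card, hOcard]
        congr 1
        generalize (wt x) = m
        cases m with
        | zero => rfl
        | succ m => rw [Nat.succ_sub_one, Nat.mul_succ, Nat.add_sub_cancel]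
      have hmem : ∀ p ∈ O.offDiag, p.1 ≠ p.2 ∧ x p.1 = 1 ∧ x p.2 = 1 := by
        intro p hp
        obtain ⟨h1, h2, h3⟩ := Finset.mem_offDiag.mp hp
        rw [hOdef, Finset.mem_filter] at h1 h2
        exact ⟨h3, h1.2, h2.2⟩
      by_cases c1 : r₀ ≠ 0 ∧ wt x = r₀ + 1
      · have c3 : ¬ (r₁ ≠ 0 ∧ wt x + r₁ = n + 1) := by omega
        rw [if_pos c1, if_neg c3, add_zero]
        have ht : ∀ p ∈ O.offDiag,
            f x * (f x - f (x + (ee p.1 + ee p.2))) = 2 := by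
          intro p hp
          obtain ⟨hij, hi, hj⟩ := hmem p hp
          have hdn := wt_flip_down hij hi hj
          exact t_eq_two (hbool x) (hbool _)
            (fact1 hsym h0 h1 hP hmin0 _ x (by omega) (by omega)).symm
        rw [Finset.sum_congr rfl ht, Finset.sum_const, nsmul_eq_mul, hcard]
        ring_nf
        exact le_refl _
      · rw [if_neg c1, zero_add]
        by_cases c3 : r₁ ≠ 0 ∧ wt x + r₁ = n + 1
        · rw [if_pos c3]
          have ht : ∀ p ∈ O.offDiag,
              f x * (f x - f (x + (ee p.1 + ee p.2))) = 2 := by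
            intro p hp
            obtain ⟨hij, hi, hj⟩ := hmem p hp
            have hdn := wt_flip_down hij hi hj
            exact t_eq_two (hbool x) (hbool _)
              (fact2 hsym h0 h1 hP hmin1 c3.1 _ x (by omega) (by omega)).symm
          rw [Finset.sum_congr rfl ht, Finset.sum_const, nsmul_eq_mul, hcard]
          ring_nf
          exact le_refl _
        · rw [if_neg c3]
          exact Finset.sum_nonneg fun p _ => tnn p
    rw [phi]
    linarith [boundZ, boundO, hmono]
  -- Total sum of phi
  have hsumphi : ∑ x : Fin n → ZMod 2, phi n r₀ r₁ (wt x) = 4 * K := by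
    simp only [phi]
    rw [Finset.sum_add_distrib, Finset.sum_add_distrib, Finset.sum_add_distrib]
    have hS0 : ∑ x : Fin n → ZMod 2,
        (if r₀ ≠ 0 ∧ wt x + 1 = r₀ then 2 * (((n - wt x) * (n - wt x - 1) : ℕ) : ℝ) else 0)
        = if r₀ = 0 then 0 else
            2 * (((n : ℝ) - r₀ + 1) * ((n : ℝ) - r₀) * (n.choose (r₀ - 1) : ℝ)) := by
      by_cases hr : r₀ = 0
      · simp [hr]
      · rw [if_neg hr,
          sum_ite_wt (n := n) (r₀ - 1) (fun k => 2 * (((n - k) * (n - k - 1) : ℕ) : ℝ))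
            (fun k => r₀ ≠ 0 ∧ k + 1 = r₀) (fun k => by omega)]
        rw [show n - (r₀-1) = n - r₀ + 1 from by omega,
          show n - r₀ + 1 - 1 = n - r₀ from by omega]
        push_cast [Nat.cast_sub (show r₀ ≤ n by omega)]
        ring
    have hS1 : ∑ x : Fin n → ZMod 2,
        (if r₀ ≠ 0 ∧ wt x = r₀ + 1 then 2 * ((wt x * (wt x - 1) : ℕ) : ℝ) else 0)
        = if r₀ = 0 then 0 else
            2 * (((n : ℝ) - r₀ + 1) * ((n : ℝ) - r₀) * (n.choose (r₀ - 1) : ℝ)) := by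
      by_cases hr : r₀ = 0
      · simp [hr]
      · rw [if_neg hr,
          sum_ite_wt (n := n) (r₀ + 1) (fun k => 2 * ((k * (k - 1) : ℕ) : ℝ))
            (fun k => r₀ ≠ 0 ∧ k = r₀ + 1) (fun k => by omega)]
        rw [show r₀ + 1 - 1 = r₀ from by omega]
        have hnat := natid1 n r₀ hr h0
        have : ((n.choose (r₀+1) : ℕ) : ℝ) * (2 * (((r₀+1) * r₀ : ℕ) : ℝ))
            = 2 * (((n.choose (r₀-1) * ((n-r₀+1) * (n-r₀)) : ℕ)) : ℝ) := by
          rw [← hnat]; push_cast; ring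
        rw [this]
        push_cast [Nat.cast_sub (show r₀ ≤ n by omega)]
        ring
    have hS2 : ∑ x : Fin n → ZMod 2,
        (if r₁ ≠ 0 ∧ wt x + r₁ + 1 = n then 2 * (((n - wt x) * (n - wt x - 1) : ℕ) : ℝ) else 0)
        = if r₁ = 0 then 0 else
            2 * (((n : ℝ) - r₁ + 1) * ((n : ℝ) - r₁) * (n.choose (r₁ - 1) : ℝ)) := by
      by_cases hr : r₁ = 0
      · simp [hr]
      · rw [if_neg hr,
          sum_ite_wt (n := n) (n - r₁ - 1) (fun k => 2 * (((n - k) * (n - k - 1) : ℕ) : ℝ))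
            (fun k => r₁ ≠ 0 ∧ k + r₁ + 1 = n) (fun k => by omega)]
        rw [show n - (n - r₁ - 1) = r₁ + 1 from by omega,
          show r₁ + 1 - 1 = r₁ from by omega]
        have hnat := natid2 n r₁ hr h1
        have : ((n.choose (n - r₁ - 1) : ℕ) : ℝ) * (2 * (((r₁+1) * r₁ : ℕ) : ℝ))
            = 2 * (((n.choose (r₁-1) * ((n-r₁+1) * (n-r₁)) : ℕ)) : ℝ) := by
          rw [← hnat]; push_cast; ring
        rw [this]
        push_cast [Nat.cast_sub (show r₁ ≤ n by omega)]
        ring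
    have hS3 : ∑ x : Fin n → ZMod 2,
        (if r₁ ≠ 0 ∧ wt x + r₁ = n + 1 then 2 * ((wt x * (wt x - 1) : ℕ) : ℝ) else 0)
        = if r₁ = 0 then 0 else
            2 * (((n : ℝ) - r₁ + 1) * ((n : ℝ) - r₁) * (n.choose (r₁ - 1) : ℝ)) := by
      by_cases hr : r₁ = 0
      · simp [hr]
      · rw [if_neg hr,
          sum_ite_wt (n := n) (n + 1 - r₁) (fun k => 2 * ((k * (k - 1) : ℕ) : ℝ))
            (fun k => r₁ ≠ 0 ∧ k + r₁ = n + 1) (fun k => by omega)]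
        have hnat := natid3 n r₁ hr h1
        have : ((n.choose (n + 1 - r₁) : ℕ) : ℝ)
              * (2 * (((n + 1 - r₁) * (n + 1 - r₁ - 1) : ℕ) : ℝ))
            = 2 * (((n.choose (r₁-1) * ((n-r₁+1) * (n-r₁)) : ℕ)) : ℝ) := by
          rw [← hnat]; push_cast; ring
        rw [this]
        push_cast [Nat.cast_sub (show r₁ ≤ n by omega)]
        ring
    rw [hS0, hS1, hS2, hS3, hK]
    split_ifs <;> ring
  -- Final assembly
  have h2n : (0:ℝ) < 2^n := by positivity
  rw [ge_iff_le, main_identity f, Finset.sum_comm]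
  have hbound : ∑ x : Fin n → ZMod 2, ∑ p : Fin n × Fin n,
      f x * (f x - f (x + (ee p.1 + ee p.2))) ≥ 4 * K := by
    rw [← hsumphi]
    exact Finset.sum_le_sum fun x _ => claimH x
  calc K / 2^n = (4 * K) / 2^n / 4 := by ring
    _ ≤ _ := by gcongr
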